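/- arXiv:2406.02423 — 2 statements merged into one kernel-verified Lean document; each statement's English description precedes it below -/
import Mathlib

section
/- Under the Liouville-type change of variables z = ∫₀ˣ (c−Q(θ))^{−1/2} dθ and Γ(z) = (c−Q(x))^{1/4} ψ(x), one has, for ψ ∈ H²(ℝ), the identity Mψ = (c−Q)^{−1/4} K Γ, where K = −∂_{zz} + q(z) + c − 2κ and q = (3/4)Q'' − 3Q − (1/16)(Q')²/(c−Q) (expressed in the variable z). -/
open MeasureTheory Filter Topology

noncomputable section

/-! ### Function space framework (classical-derivative model of Sobolev spaces) -/

/-- Membership in the Sobolev space `H^k(ℝ)`, modelled via classical derivatives: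
`ψ` is `k` times continuously differentiable and all derivatives up to order `k`
are square integrable. -/
def InHk (k : ℕ) (ψ : ℝ → ℝ) : Prop :=
  ContDiff ℝ k ψ ∧ ∀ j ≤ k, MemLp (iteratedDeriv j ψ) 2 (volume : Measure ℝ)

/-- Membership in `L²(ℝ)`. -/
def InL2 (ψ : ℝ → ℝ) : Prop := MemLp ψ 2 (volume : Measure ℝ)

/-- `ψ` agrees almost everywhere with a function in `H^k(ℝ)`. -/
def InHkAE (k : ℕ) (ψ : ℝ → ℝ) : Prop :=
  ∃ ψ', ψ =ᵐ[(volume : Measure ℝ)] ψ' ∧ InHk k ψ'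

/-- An odd function on `ℝ`. -/
def OddFun (ψ : ℝ → ℝ) : Prop := ∀ x, ψ (-x) = -ψ x

/-- The `L²(ℝ)` norm. -/
def L2norm (f : ℝ → ℝ) : ℝ := (eLpNorm f 2 (volume : Measure ℝ)).toReal

/-- The `H^k(ℝ)` norm. -/
def HkNorm (k : ℕ) (f : ℝ → ℝ) : ℝ :=
  ∑ j ∈ Finset.range (k + 1), (eLpNorm (iteratedDeriv j f) 2 (volume : Measure ℝ)).toReal

/-- The `L²(ℝ)` inner product. -/
def L2inner (f g : ℝ → ℝ) : ℝ := ∫ x : ℝ, f x * g x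

/-! ### The Camassa–Holm solitary wave profile -/

/-- The ODE `-cQ + cQ'' + 2κQ + (3/2)Q² - (1/2)(Q')² - QQ'' = 0` satisfied by the
profile of a solitary travelling wave `u(t,x) = Q(x - ct)` of the Camassa–Holm equation
`(1-∂ₓ²)uₜ + 3uuₓ + 2κuₓ - 2uₓu_{xx} - uu_{xxx} = 0`. -/
def CHWaveODE (κ c : ℝ) (Q : ℝ → ℝ) : Prop :=
  ∀ x : ℝ, -c * Q x + c * iteratedDeriv 2 Q x + 2 * κ * Q x + (3 / 2) * Q x ^ 2
      - (1 / 2) * (deriv Q x) ^ 2 - Q x * iteratedDeriv 2 Q x = 0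

/-- The standing hypotheses on the solitary wave profile `Q` of the Camassa–Holm equation
with speed `c > 2κ`: smooth, even, exponentially decaying together with all derivatives,
satisfying `c - Q > 2κ` pointwise and the profile ODE. -/
structure CHProfile (κ c : ℝ) (Q : ℝ → ℝ) : Prop where
  smooth : ∀ n : ℕ, ContDiff ℝ n Q
  even : ∀ x, Q (-x) = Q x
  decay : ∀ n : ℕ, ∃ C a : ℝ, 0 < a ∧ ∀ x : ℝ, |iteratedDeriv n Q x| ≤ C * Real.exp (-a * |x|)
  ellip : ∀ x, 2 * κ < c - Q x
  ode : CHWaveODE κ c Q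

/-! ### The operators `M`, `L` and the nonlinearity `N` -/

/-- `M = ∂ₓ(Q-c)∂ₓ + Q'' - 3Q + c - 2κ`, i.e.
`Mψ = (Q-c)ψ'' + Q'ψ' + (Q'' - 3Q + c - 2κ)ψ`. -/
def Mop (κ c : ℝ) (Q : ℝ → ℝ) (ψ : ℝ → ℝ) : ℝ → ℝ := fun x =>
  (Q x - c) * iteratedDeriv 2 ψ x + deriv Q x * deriv ψ x
    + (iteratedDeriv 2 Q x - 3 * Q x + c - 2 * κ) * ψ x

/-- `L = -∂ₓ M ∂ₓ`. -/
def Lop (κ c : ℝ) (Q : ℝ → ℝ) (ψ : ℝ → ℝ) : ℝ → ℝ := fun x =>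
  -deriv (Mop κ c Q (deriv ψ)) x

/-- The nonlinearity `N(ψ) = ((1/2)ψ_{xx}² + ψₓψ_{xxx} - (3/2)ψₓ²)ₓ`. -/
def Nop (ψ : ℝ → ℝ) : ℝ → ℝ :=
  deriv fun x => (1 / 2) * (iteratedDeriv 2 ψ x) ^ 2
    + deriv ψ x * iteratedDeriv 3 ψ x - (3 / 2) * (deriv ψ x) ^ 2

/-! ### Spectral notions for (real) operators on `L²(ℝ)` with domain `D` -/

/-- `ψ` is an eigenfunction of `T` (with domain `D`) for the eigenvalue `μ`. -/
def IsEigenfun (T : (ℝ → ℝ) → ℝ → ℝ) (D : (ℝ → ℝ) → Prop) (μ : ℝ) (ψ : ℝ → ℝ) : Prop :=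
  D ψ ∧ ψ ≠ 0 ∧ ∀ x, T ψ x = μ * ψ x

/-- `μ` is an eigenvalue of `T` with domain `D`. -/
def IsEigenvalue (T : (ℝ → ℝ) → ℝ → ℝ) (D : (ℝ → ℝ) → Prop) (μ : ℝ) : Prop :=
  ∃ ψ, IsEigenfun T D μ ψ

/-- `μ` is a simple eigenvalue of `T`: it is an eigenvalue and any two eigenfunctions
are proportional. -/
def IsSimpleEigenvalue (T : (ℝ → ℝ) → ℝ → ℝ) (D : (ℝ → ℝ) → Prop) (μ : ℝ) : Prop :=
  IsEigenvalue T D μ ∧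
    ∀ ψ φ, IsEigenfun T D μ ψ → IsEigenfun T D μ φ → ∃ a : ℝ, ∀ x, φ x = a * ψ x

/-- `μ` belongs to the resolvent set of the operator `T` with domain `D`, regarded as an
operator on the space of functions satisfying `S`: for every right-hand side `f` in `S`
the equation `(T - μ)ψ = f` has a unique solution in `D`, with a bound `‖ψ‖_{L²} ≤ C‖f‖_{L²}`
uniform in `f`. -/
def InResolventOn (T : (ℝ → ℝ) → ℝ → ℝ) (D S : (ℝ → ℝ) → Prop) (μ : ℝ) : Prop :=
  ∃ C > 0, ∀ f, S f →
    (∃ ψ, D ψ ∧ (∀ᵐ x ∂(volume : Measure ℝ), T ψ x - μ * ψ x = f x) ∧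
      L2norm ψ ≤ C * L2norm f) ∧
    ∀ ψ φ, D ψ → D φ → (∀ᵐ x ∂(volume : Measure ℝ), T ψ x - μ * ψ x = f x) →
      (∀ᵐ x ∂(volume : Measure ℝ), T φ x - μ * φ x = f x) → ψ = φ

/-- Domain of `M`: `H²(ℝ)`. -/
def DomM : (ℝ → ℝ) → Prop := InHk 2

/-- Domain of `L`: `H⁴(ℝ)`. -/
def DomL : (ℝ → ℝ) → Prop := InHk 4

/-- Domain of `L` restricted to odd functions: `H⁴_odd(ℝ)`. -/
def DomLodd (ψ : ℝ → ℝ) : Prop := InHk 4 ψ ∧ OddFun ψ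

/-- `L²_odd(ℝ)`. -/
def L2odd (f : ℝ → ℝ) : Prop := InL2 f ∧ OddFun f

/-- `μ` belongs to the essential spectrum of `T` (domain `D`): there is a normalized
singular (Weyl) sequence, weakly null, with `(T - μ)ψₙ → 0` in `L²`. -/
def InEssSpectrum (T : (ℝ → ℝ) → ℝ → ℝ) (D : (ℝ → ℝ) → Prop) (μ : ℝ) : Prop :=
  ∃ ψ : ℕ → ℝ → ℝ, (∀ n, D (ψ n)) ∧ (∀ n, L2norm (ψ n) = 1) ∧
    (∀ f, InL2 f → Tendsto (fun n => L2inner (ψ n) f) atTop (𝓝 0)) ∧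
    Tendsto (fun n => L2norm fun x => T (ψ n) x - μ * ψ n x) atTop (𝓝 0)

/-! ### Complexified setting and the spatial-dynamics block operator `𝓛` -/

/-- Membership in the complex Sobolev space `H^k(ℝ; ℂ)`. -/
def InHkC (k : ℕ) (ψ : ℝ → ℂ) : Prop :=
  ContDiff ℝ k ψ ∧ ∀ j ≤ k, MemLp (iteratedDeriv j ψ) 2 (volume : Measure ℝ)

/-- Membership in `L²(ℝ; ℂ)`. -/
def InL2C (ψ : ℝ → ℂ) : Prop := MemLp ψ 2 (volume : Measure ℝ)

def OddFunC (ψ : ℝ → ℂ) : Prop := ∀ x, ψ (-x) = -ψ x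

def L2normC (f : ℝ → ℂ) : ℝ := (eLpNorm f 2 (volume : Measure ℝ)).toReal

def HkNormC (k : ℕ) (f : ℝ → ℂ) : ℝ :=
  ∑ j ∈ Finset.range (k + 1), (eLpNorm (iteratedDeriv j f) 2 (volume : Measure ℝ)).toReal

/-- The complexification of the operator `M`. -/
def MopC (κ c : ℝ) (Q : ℝ → ℝ) (ψ : ℝ → ℂ) : ℝ → ℂ := fun x =>
  (↑(Q x - c) : ℂ) * iteratedDeriv 2 ψ x + (↑(deriv Q x) : ℂ) * deriv ψ x
    + (↑(iteratedDeriv 2 Q x - 3 * Q x + c - 2 * κ) : ℂ) * ψ x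

/-- The complexification of the operator `L = -∂ₓ M ∂ₓ`. -/
def LopC (κ c : ℝ) (Q : ℝ → ℝ) (ψ : ℝ → ℂ) : ℝ → ℂ := fun x =>
  -deriv (MopC κ c Q (deriv ψ)) x

/-- Elements of the phase space: pairs `W = (W₁, W₂)` of complex-valued functions. -/
abbrev WSpace := (ℝ → ℂ) × (ℝ → ℂ)

/-- `W ∈ X = L²_odd(ℝ) × H²_odd(ℝ)`. -/
def InX (W : WSpace) : Prop :=
  (InL2C W.1 ∧ OddFunC W.1) ∧ (InHkC 2 W.2 ∧ OddFunC W.2)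

/-- `W ∈ Y = H²_odd(ℝ) × H⁴_odd(ℝ)`, the domain of `𝓛`. -/
def InY (W : WSpace) : Prop :=
  (InHkC 2 W.1 ∧ OddFunC W.1) ∧ (InHkC 4 W.2 ∧ OddFunC W.2)

/-- `‖W‖_X = ‖W₁‖_{L²} + ‖W₂‖_{H²}`. -/
def XnormC (W : WSpace) : ℝ := L2normC W.1 + HkNormC 2 W.2

/-- `‖W‖_Y = ‖W₁‖_{H²} + ‖W₂‖_{H⁴}`. -/
def YnormC (W : WSpace) : ℝ := HkNormC 2 W.1 + HkNormC 4 W.2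

/-- `W` solves the resolvent equation `(𝓛 - μ)W = F`, where `𝓛(W₁, W₂) = (L W₂, W₁)`. -/
def SolvesBlock (κ c : ℝ) (Q : ℝ → ℝ) (μ : ℂ) (W F : WSpace) : Prop :=
  (∀ᵐ x ∂(volume : Measure ℝ), LopC κ c Q W.2 x - μ * W.1 x = F.1 x) ∧
  (∀ᵐ x ∂(volume : Measure ℝ), W.1 x - μ * W.2 x = F.2 x)

/-- `μ ∈ ρ(𝓛)`: the resolvent equation is uniquely solvable in `Y` for every `F ∈ X`,
with an `X → X` bound. -/
def InResolventBlock (κ c : ℝ) (Q : ℝ → ℝ) (μ : ℂ) : Prop :=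
  ∃ C > 0, ∀ F, InX F →
    (∃ W, InY W ∧ SolvesBlock κ c Q μ W F ∧ XnormC W ≤ C * XnormC F) ∧
    ∀ W W', InY W → InY W' → SolvesBlock κ c Q μ W F → SolvesBlock κ c Q μ W' F → W = W'

/-- `W` is an eigenvector of the block operator `𝓛(W₁, W₂) = (L W₂, W₁)` for the
eigenvalue `μ`. -/
def IsBlockEigenfun (κ c : ℝ) (Q : ℝ → ℝ) (μ : ℂ) (W : WSpace) : Prop :=
  InY W ∧ W ≠ 0 ∧ (∀ x, LopC κ c Q W.2 x = μ * W.1 x) ∧ ∀ x, W.1 x = μ * W.2 x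

/-- `μ` is an eigenvalue of the block operator `𝓛`. -/
def IsEigenvalueBlock (κ c : ℝ) (Q : ℝ → ℝ) (μ : ℂ) : Prop :=
  ∃ W : WSpace, IsBlockEigenfun κ c Q μ W

/-- `μ ∈ ρ(L)` for the complexified operator `L : H⁴_odd ⊂ L²_odd → L²_odd`. -/
def InResolventLC (κ c : ℝ) (Q : ℝ → ℝ) (μ : ℂ) : Prop :=
  ∃ C > 0, ∀ f : ℝ → ℂ, InL2C f → OddFunC f →
    (∃ ψ, InHkC 4 ψ ∧ OddFunC ψ ∧
      (∀ᵐ x ∂(volume : Measure ℝ), LopC κ c Q ψ x - μ * ψ x = f x) ∧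
      L2normC ψ ≤ C * L2normC f) ∧
    ∀ ψ φ, InHkC 4 ψ ∧ OddFunC ψ → InHkC 4 φ ∧ OddFunC φ →
      (∀ᵐ x ∂(volume : Measure ℝ), LopC κ c Q ψ x - μ * ψ x = f x) →
      (∀ᵐ x ∂(volume : Measure ℝ), LopC κ c Q φ x - μ * φ x = f x) → ψ = φ

/-- `μ` is an eigenvalue of the complexified `L : H⁴_odd ⊂ L²_odd → L²_odd`. -/
def IsEigenvalueLC (κ c : ℝ) (Q : ℝ → ℝ) (μ : ℂ) : Prop :=
  ∃ ψ : ℝ → ℂ, InHkC 4 ψ ∧ OddFunC ψ ∧ ψ ≠ 0 ∧ ∀ x, LopC κ c Q ψ x = μ * ψ x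

/-! ### Real block operator setting (for the reversibility statement) -/

abbrev WSpaceR := (ℝ → ℝ) × (ℝ → ℝ)

/-- `W ∈ Y = H²_odd(ℝ) × H⁴_odd(ℝ)` (real-valued version). -/
def InYR (W : WSpaceR) : Prop :=
  (InHk 2 W.1 ∧ OddFun W.1) ∧ (InHk 4 W.2 ∧ OddFun W.2)

/-- `‖W‖_Y` (real-valued version). -/
def YnormR (W : WSpaceR) : ℝ := HkNorm 2 W.1 + HkNorm 4 W.2

/-- The block operator `𝓛(W₁, W₂) = (L W₂, W₁)` (real-valued version). -/
def blockLR (κ c : ℝ) (Q : ℝ → ℝ) (W : WSpaceR) : WSpaceR := (Lop κ c Q W.2, W.1)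

/-- The nonlinearity `𝓝(W₁, W₂) = (-N(W₂), 0)`. -/
def blockNR (W : WSpaceR) : WSpaceR := (fun x => -Nop W.2 x, 0)

/-- The reverser `S(W₁, W₂) = (-W₁, W₂)`. -/
def Srev (W : WSpaceR) : WSpaceR := (-W.1, W.2)

/-! Put `s = (c - Q)^{1/4}`, so that `c - Q = s⁴` and `z' = s⁻²`. Since `z` is a local
diffeomorphism, `Γ = (sψ) ∘ z⁻¹` near every point of the range of `z`, and the chain rule gives
`Γ' ∘ z = (sψ)' s²` and `Γ'' ∘ z = ((sψ)' s²)' s²`. Differentiating `c - Q = s⁴` twice expresses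
`Q'` and `Q''` through `s, s', s''` as well, after which `Mψ = s⁻¹ (-Γ'' + (q + c - 2κ) Γ) ∘ z` is a
polynomial identity in `s, s', s'', ψ, ψ', ψ''` and `s⁻¹`. -/

open Real

theorem HasStrictDerivAt.of_comp_eq {𝕜 : Type*} [NontriviallyNormedField 𝕜] [CompleteSpace 𝕜]
    {z Φ h : 𝕜 → 𝕜} {z' h' x : 𝕜} (hz : HasStrictDerivAt z z' x) (hz' : z' ≠ 0)
    (hh : HasStrictDerivAt h h' x) (hΦ : ∀ᶠ y in 𝓝 x, Φ (z y) = h y) :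
    HasStrictDerivAt Φ (h' / z') (z x) := by
  set zi := hz.localInverse z z' x hz'
  have hzi : HasStrictDerivAt zi z'⁻¹ (z x) := hz.to_localInverse hz'
  have hzi_x : zi (z x) = x := (hz.hasStrictFDerivAt_equiv hz').localInverse_apply_image
  have hzi_tendsto : Tendsto zi (𝓝 (z x)) (𝓝 x) := by
    simpa only [hzi_x] using hzi.hasDerivAt.continuousAt.tendsto
  have hΦ_eq : h ∘ zi =ᶠ[𝓝 (z x)] Φ := by
    filter_upwards [(hz.hasStrictFDerivAt_equiv hz').eventually_right_inverse,
      hzi_tendsto.eventually hΦ] with y hzy hΦy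
    rw [Function.comp_apply, ← hΦy, hzy]
  rw [div_eq_mul_inv]
  exact ((hzi_x ▸ hh).comp (z x) hzi).congr_of_eventuallyEq hΦ_eq

theorem ContDiff.hasStrictDerivAt_deriv {𝕜 F : Type*} [RCLike 𝕜] [NormedAddCommGroup F]
    [NormedSpace 𝕜 F] {f : 𝕜 → F} (hf : ContDiff 𝕜 2 f) (x : 𝕜) :
    HasStrictDerivAt (deriv f) (iteratedDeriv 2 f x) x := by
  rw [iteratedDeriv_succ', iteratedDeriv_one]
  exact (hf.deriv' (n := 1)).contDiffAt.hasStrictDerivAt one_ne_zero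

theorem iteratedDeriv_two_of_comp_eq_mul {s ψ z Γ : ℝ → ℝ} (hs : ContDiff ℝ 2 s)
    (hψ : ContDiff ℝ 2 ψ) (hs0 : ∀ y, s y ≠ 0) (hz : ∀ y, HasStrictDerivAt z (s y ^ 2)⁻¹ y)
    (hΓ : ∀ y, Γ (z y) = s y * ψ y) (x : ℝ) :
    iteratedDeriv 2 Γ (z x) = s x ^ 5 * iteratedDeriv 2 ψ x
      + 4 * s x ^ 4 * deriv s x * deriv ψ x
      + (s x ^ 4 * iteratedDeriv 2 s x + 2 * s x ^ 3 * deriv s x ^ 2) * ψ x := by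
  have hs1 y : HasStrictDerivAt s (deriv s y) y := hs.contDiffAt.hasStrictDerivAt (by norm_num)
  have hψ1 y : HasStrictDerivAt ψ (deriv ψ y) y := hψ.contDiffAt.hasStrictDerivAt (by norm_num)
  have hΓ' y : deriv Γ (z y) = (deriv s y * ψ y + s y * deriv ψ y) * s y ^ 2 := by
    rw [((hz y).of_comp_eq (by simpa using hs0 y) ((hs1 y).mul (hψ1 y))
      (.of_forall hΓ)).hasDerivAt.deriv, div_inv_eq_mul]
  have hΓ'_hasDeriv : HasStrictDerivAt (fun y => (deriv s y * ψ y + s y * deriv ψ y) * s y ^ 2)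
      ((iteratedDeriv 2 s x * ψ x + deriv s x * deriv ψ x
        + (deriv s x * deriv ψ x + s x * iteratedDeriv 2 ψ x)) * s x ^ 2
        + (deriv s x * ψ x + s x * deriv ψ x) * (2 * s x * deriv s x)) x :=
    ((hs.hasStrictDerivAt_deriv x).fun_mul (hψ1 x) |>.fun_add
      ((hs1 x).fun_mul (hψ.hasStrictDerivAt_deriv x))).fun_mul ((hs1 x).fun_pow 2)
      |>.congr_deriv (by norm_num)
  rw [iteratedDeriv_succ', iteratedDeriv_one, ((hz x).of_comp_eq (by simpa using hs0 x) hΓ'_hasDeriv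
    (.of_forall hΓ')).hasDerivAt.deriv, div_inv_eq_mul]
  ring

theorem iteratedDeriv_two_pow_four {s : ℝ → ℝ} (hs : ContDiff ℝ 2 s) (x : ℝ) :
    iteratedDeriv 2 (fun y => s y ^ 4) x
      = 12 * s x ^ 2 * deriv s x ^ 2 + 4 * s x ^ 3 * iteratedDeriv 2 s x := by
  have hs1 y : HasDerivAt s (deriv s y) y :=
    (hs.differentiable (by norm_num) y).hasDerivAt
  have hderiv : deriv (fun y => s y ^ 4) = fun y => 4 * s y ^ 3 * deriv s y := by
    funext y
    rw [deriv_fun_pow (hs1 y).differentiableAt]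
    norm_num
  rw [iteratedDeriv_succ', iteratedDeriv_one, hderiv]
  convert (((hs1 x).fun_pow 3).const_mul 4 |>.fun_mul
    (hs.hasStrictDerivAt_deriv x).hasDerivAt).deriv using 1
  norm_num
  ring

theorem rpow_one_div_four_pow_four {x : ℝ} (hx : 0 ≤ x) : (x ^ ((1 : ℝ) / 4)) ^ 4 = x := by
  rw [← rpow_mul_natCast hx]; norm_num

theorem rpow_neg_one_div_two_eq {x : ℝ} (hx : 0 ≤ x) :
    x ^ (-(1 : ℝ) / 2) = ((x ^ ((1 : ℝ) / 4)) ^ 2)⁻¹ := by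
  rw [← rpow_mul_natCast hx, ← rpow_neg hx]; norm_num

theorem rpow_neg_one_div_four_eq {x : ℝ} (hx : 0 ≤ x) :
    x ^ (-(1 : ℝ) / 4) = (x ^ ((1 : ℝ) / 4))⁻¹ := by
  rw [← rpow_neg hx]; norm_num

theorem Mop_eq_liouville (κ c : ℝ) {Q s ψ z Γ : ℝ → ℝ} (hs : ContDiff ℝ 2 s)
    (hψ : ContDiff ℝ 2 ψ) (hs0 : ∀ y, s y ≠ 0) (hQ : ∀ y, s y ^ 4 = c - Q y)
    (hz : ∀ y, HasStrictDerivAt z (s y ^ 2)⁻¹ y) (hΓ : ∀ y, Γ (z y) = s y * ψ y) (x : ℝ) :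
    Mop κ c Q ψ x = (s x)⁻¹ * (-(iteratedDeriv 2 Γ (z x))
      + ((3/4) * iteratedDeriv 2 Q x - 3 * Q x - (1/16) * (deriv Q x) ^ 2 / (c - Q x)
        + c - 2 * κ) * Γ (z x)) := by
  obtain rfl : Q = fun y => c - s y ^ 4 := funext fun y => by linarith [hQ y]
  have hQ' : deriv (fun y => c - s y ^ 4) x = -(4 * s x ^ 3 * deriv s x) := by
    rw [deriv_const_sub, deriv_fun_pow (hs.differentiable two_ne_zero x)]
    norm_num
  have hQ'' : iteratedDeriv 2 (fun y => c - s y ^ 4) x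
      = -(12 * s x ^ 2 * deriv s x ^ 2 + 4 * s x ^ 3 * iteratedDeriv 2 s x) := by
    rw [iteratedDeriv_const_sub two_pos, iteratedDeriv_neg, iteratedDeriv_two_pow_four hs]
  rw [iteratedDeriv_two_of_comp_eq_mul hs hψ hs0 hz hΓ x, hΓ x, Mop, hQ', hQ'']
  field_simp [hs0 x]
  ring

theorem Mop_liouville_transform_general (κ c : ℝ) (hκ : 0 < κ)
    (Q : ℝ → ℝ) (hQ : CHProfile κ c Q) (ψ Γ q : ℝ → ℝ) (hψ : InHk 2 ψ)
    (hΓ : ∀ x : ℝ, Γ (∫ θ in (0:ℝ)..x, (c - Q θ) ^ (-(1:ℝ)/2))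
      = (c - Q x) ^ ((1:ℝ)/4) * ψ x)
    (hq : ∀ x : ℝ, q (∫ θ in (0:ℝ)..x, (c - Q θ) ^ (-(1:ℝ)/2))
      = (3/4) * iteratedDeriv 2 Q x - 3 * Q x - (1/16) * (deriv Q x) ^ 2 / (c - Q x)) :
    ∀ x : ℝ, Mop κ c Q ψ x = (c - Q x) ^ (-(1:ℝ)/4) *
      (-(iteratedDeriv 2 Γ (∫ θ in (0:ℝ)..x, (c - Q θ) ^ (-(1:ℝ)/2)))
        + (q (∫ θ in (0:ℝ)..x, (c - Q θ) ^ (-(1:ℝ)/2)) + c - 2 * κ)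
          * Γ (∫ θ in (0:ℝ)..x, (c - Q θ) ^ (-(1:ℝ)/2))) := by
  intro x
  have hpos y : 0 < c - Q y := by linarith [hQ.ellip y]
  have hw : Continuous fun θ => (c - Q θ) ^ (-(1:ℝ)/2) :=
    (continuous_const.sub (hQ.smooth 0).continuous).rpow_const fun y => .inl (hpos y).ne'
  have hz y : HasStrictDerivAt (fun u => ∫ θ in (0:ℝ)..u, (c - Q θ) ^ (-(1:ℝ)/2))
      (((c - Q y) ^ ((1:ℝ)/4)) ^ 2)⁻¹ y :=
    rpow_neg_one_div_two_eq (hpos y).le ▸ intervalIntegral.integral_hasStrictDerivAt_right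
      (hw.intervalIntegrable _ _) (hw.stronglyMeasurableAtFilter _ _) hw.continuousAt
  rw [hq x, rpow_neg_one_div_four_eq (hpos x).le]
  exact Mop_eq_liouville κ c
    ((contDiff_const.sub (hQ.smooth 2)).rpow_const_of_ne fun y => (hpos y).ne') hψ.1
    (fun y => (rpow_pos_of_pos (hpos y) _).ne') (fun y => rpow_one_div_four_pow_four (hpos y).le)
    hz hΓ x

/-- Under the Liouville change of variables
`z(x) = ∫₀ˣ (c - Q(θ))^{-1/2} dθ`, `Γ(z(x)) = (c - Q(x))^{1/4} ψ(x)`, one has, for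
`ψ ∈ H²(ℝ)`, the identity `Mψ = (c-Q)^{-1/4} KΓ` with
`K = -∂_{zz} + q(z) + c - 2κ` and `q = (3/4)Q'' - 3Q - (1/16)(Q')²/(c-Q)`. -/
theorem Mop_liouville_transform (κ c : ℝ) (hκ : 0 < κ) (hc : 2 * κ < c)
    (Q : ℝ → ℝ) (hQ : CHProfile κ c Q) (ψ Γ q : ℝ → ℝ) (hψ : InHk 2 ψ)
    (hΓ : ∀ x : ℝ, Γ (∫ θ in (0:ℝ)..x, (c - Q θ) ^ (-(1:ℝ)/2))
      = (c - Q x) ^ ((1:ℝ)/4) * ψ x)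
    (hq : ∀ x : ℝ, q (∫ θ in (0:ℝ)..x, (c - Q θ) ^ (-(1:ℝ)/2))
      = (3/4) * iteratedDeriv 2 Q x - 3 * Q x - (1/16) * (deriv Q x) ^ 2 / (c - Q x)) :
    ∀ x : ℝ, Mop κ c Q ψ x = (c - Q x) ^ (-(1:ℝ)/4) *
      (-(iteratedDeriv 2 Γ (∫ θ in (0:ℝ)..x, (c - Q θ) ^ (-(1:ℝ)/2)))
        + (q (∫ θ in (0:ℝ)..x, (c - Q θ) ^ (-(1:ℝ)/2)) + c - 2 * κ)
          * Γ (∫ θ in (0:ℝ)..x, (c - Q θ) ^ (-(1:ℝ)/2))) :=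
  Mop_liouville_transform_general κ c hκ Q hQ ψ Γ q hψ hΓ hq
end
end

section
/- If ψ ∈ H⁴(ℝ) is odd and Lψ = −∂ₓM∂ₓψ = 0, then ψ = 0; that is, the kernel of L restricted to odd H⁴ functions is trivial. -/
open MeasureTheory Filter Topology

noncomputable section

/-!
Since `Lψ = -(Mψ')'`, the function `Mψ'` is constant; it is also square integrable, because the
coefficients of `M` are bounded, so it vanishes. Hence `ψ'` lies in the kernel of `M`, that is
`ψ' = a Q'`, and `ψ = a Q + b` is even. An odd and even function is zero.
-/

lemma InHk.mono {k m : ℕ} {ψ : ℝ → ℝ} (h : InHk k ψ) (hmk : m ≤ k) : InHk m ψ :=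
  ⟨h.1.of_le (by exact_mod_cast hmk), fun j hj => h.2 j (hj.trans hmk)⟩

lemma InHk.deriv {k : ℕ} {ψ : ℝ → ℝ} (h : InHk (k + 1) ψ) : InHk k (deriv ψ) := by
  refine ⟨(contDiff_succ_iff_deriv.mp (by exact_mod_cast h.1)).2.2, fun j hj => ?_⟩
  rw [← iteratedDeriv_succ']
  exact h.2 (j + 1) (by omega)

lemma CHProfile.memLp_top_iteratedDeriv {κ c : ℝ} {Q : ℝ → ℝ} (hQ : CHProfile κ c Q) (n : ℕ) :
    MemLp (iteratedDeriv n Q) ⊤ volume := by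
  obtain ⟨C, a, ha, hC⟩ := hQ.decay n
  refine memLp_top_of_bound ((hQ.smooth n).continuous_iteratedDeriv n le_rfl).aestronglyMeasurable
    |C| (Filter.Eventually.of_forall fun x => ?_)
  have hexp : Real.exp (-a * |x|) ≤ 1 :=
    Real.exp_le_one_iff.mpr (by nlinarith [abs_nonneg x])
  calc ‖iteratedDeriv n Q x‖ ≤ C * Real.exp (-a * |x|) := hC x
    _ ≤ |C| * 1 := by gcongr; exact le_abs_self C
    _ = |C| := mul_one _

lemma eq_zero_of_deriv_eq_zero_of_memLp {E : Type*} [NormedAddCommGroup E] [NormedSpace ℝ E]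
    {f : ℝ → E} {p : ENNReal} (hp0 : p ≠ 0) (hp : p ≠ ⊤) (hf : Differentiable ℝ f)
    (hf' : ∀ x, deriv f x = 0) (hfp : MemLp f p volume) (x : ℝ) : f x = 0 := by
  have hconst : f = fun _ => f 0 := funext fun y => is_const_of_deriv_eq_zero hf hf' y 0
  rw [hconst, memLp_const_iff hp0 hp, Real.volume_univ] at hfp
  exact (congrFun hconst x).trans (hfp.resolve_right (lt_irrefl _))

lemma differentiable_Mop {κ c : ℝ} {Q φ : ℝ → ℝ} (hQ : ContDiff ℝ 3 Q) (hφ : ContDiff ℝ 3 φ) :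
    Differentiable ℝ (Mop κ c Q φ) := by
  have hQ1 : Differentiable ℝ (deriv Q) := by
    simpa using hQ.differentiable_iteratedDeriv 1 (by norm_num)
  have hQ2 := hQ.differentiable_iteratedDeriv 2 (by norm_num)
  have hφ1 : Differentiable ℝ (deriv φ) := by
    simpa using hφ.differentiable_iteratedDeriv 1 (by norm_num)
  have hφ2 := hφ.differentiable_iteratedDeriv 2 (by norm_num)
  have hQ0 := hQ.differentiable (by norm_num)
  have hφ0 := hφ.differentiable (by norm_num)
  unfold Mop
  fun_prop

lemma memLp_Mop {κ c : ℝ} {Q φ : ℝ → ℝ} (hQ : ∀ n ≤ 2, MemLp (iteratedDeriv n Q) ⊤ volume)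
    (hφ : InHk 2 φ) : MemLp (Mop κ c Q φ) 2 volume := by
  have hQ0 : MemLp Q ⊤ volume := by simpa using hQ 0 (by norm_num)
  have hQ1 : MemLp (deriv Q) ⊤ volume := by simpa using hQ 1 (by norm_num)
  have hφ0 : MemLp φ 2 volume := by simpa using hφ.2 0 (by norm_num)
  have hφ1 : MemLp (deriv φ) 2 volume := by simpa using hφ.2 1 (by norm_num)
  have hcoef0 := (hφ.2 2 le_rfl).mul' (r := 2) (hQ0.sub (memLp_top_const c))
  have hcoef2 := hφ0.mul' (r := 2) ((((hQ 2 le_rfl).sub (hQ0.const_mul 3)).add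
    (memLp_top_const c)).sub (memLp_top_const (2 * κ)))
  exact (hcoef0.add (hφ1.mul' (r := 2) hQ1)).add hcoef2

lemma OddFun.eq_zero_of_deriv_eq_const_mul_deriv_of_even {ψ Q : ℝ → ℝ} {a : ℝ} (hψ : OddFun ψ)
    (hψd : Differentiable ℝ ψ) (hQd : Differentiable ℝ Q) (hQ : ∀ x, Q (-x) = Q x)
    (h : ∀ x, deriv ψ x = a * deriv Q x) (x : ℝ) : ψ x = 0 := by
  have hconst : ∀ y, ψ y - a * Q y = ψ 0 - a * Q 0 := fun y =>
    is_const_of_deriv_eq_zero (hψd.sub (hQd.const_mul a)) (fun z => by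
      rw [deriv_sub (hψd z) ((hQd.const_mul a) z), deriv_const_mul a (hQd z), h z, sub_self])
      y 0
  have heven : ψ (-x) = ψ x := by
    have h' := hconst (-x)
    rw [hQ] at h'
    linarith [hconst x]
  linarith [hψ x]

theorem Lop_odd_kernel_trivial_general (κ c : ℝ)
    (Q : ℝ → ℝ) (hQ : CHProfile κ c Q)
    (hkerM : ∀ φ, InHk 2 φ → (∀ x, Mop κ c Q φ x = 0) →
      ∃ a : ℝ, ∀ x, φ x = a * deriv Q x) :
    ∀ ψ, InHk 4 ψ → OddFun ψ → (∀ x, Lop κ c Q ψ x = 0) → ∀ x, ψ x = 0 := by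
  intro ψ hψ hodd hL
  have hψ' : InHk 3 (deriv ψ) := hψ.deriv
  have hMψ' : ∀ x, Mop κ c Q (deriv ψ) x = 0 :=
    eq_zero_of_deriv_eq_zero_of_memLp two_ne_zero ENNReal.ofNat_ne_top
      (differentiable_Mop (hQ.smooth 3) hψ'.1) (fun x => neg_eq_zero.mp (hL x))
      (memLp_Mop (fun n _ => hQ.memLp_top_iteratedDeriv n) (hψ'.mono (by norm_num)))
  obtain ⟨a, ha⟩ := hkerM _ (hψ'.mono (by norm_num)) hMψ'
  exact hodd.eq_zero_of_deriv_eq_const_mul_deriv_of_even (hψ.1.differentiable (by norm_num))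
    ((hQ.smooth 1).differentiable (by norm_num)) hQ.even ha

/-- If `ψ ∈ H⁴(ℝ)` is odd and `Lψ = -∂ₓM∂ₓψ = 0`, then `ψ = 0`:
the kernel of `L` restricted to odd `H⁴` functions is trivial. -/
theorem Lop_odd_kernel_trivial (κ c : ℝ) (hκ : 0 < κ) (hc : 2 * κ < c)
    (Q : ℝ → ℝ) (hQ : CHProfile κ c Q)
    (hkerM : ∀ φ, InHk 2 φ → (∀ x, Mop κ c Q φ x = 0) →
      ∃ a : ℝ, ∀ x, φ x = a * deriv Q x) :
    ∀ ψ, InHk 4 ψ → OddFun ψ → (∀ x, Lop κ c Q ψ x = 0) → ∀ x, ψ x = 0 :=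
  Lop_odd_kernel_trivial_general κ c Q hQ hkerM
end
end
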